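/- arXiv:1802.08921 — 3 statements merged into one kernel-verified Lean document; each statement's English description precedes it below -/
import Mathlib

section
/- Let X = ℕ with its natural metric and let T : ℓ¹(ℕ) → ℓ¹(ℕ) be the rank-one operator Tξ = (Σₙ ξₙ) δ₀. Then T is bounded, but T is not a limit in operator norm of bounded operators with finite propagation; that is, T does not belong to the ℓ¹ uniform Roe algebra B¹_u(ℕ). More precisely, for every bounded operator S on ℓ¹(ℕ) with finite propagation, ‖T − S‖ ≥ 1. -/
open scoped ENNReal

/-- A map between (pseudo)metric spaces is uniformly expansive if points at distance at most `R`
are sent to points at distance at most `S = S(R)`. -/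
def UniformlyExpansive {X Y : Type*} [PseudoMetricSpace X] [PseudoMetricSpace Y]
    (f : X → Y) : Prop :=
  ∀ R : ℝ, 0 < R → ∃ S : ℝ, 0 < S ∧ ∀ x₁ x₂ : X, dist x₁ x₂ ≤ R → dist (f x₁) (f x₂) ≤ S

/-- Two maps are close if they are at uniformly bounded distance. -/
def Close {X Y : Type*} [PseudoMetricSpace Y] (f g : X → Y) : Prop :=
  ∃ C : ℝ, 0 < C ∧ ∀ x : X, dist (f x) (g x) ≤ C

/-- `f : X → Y` is a coarse equivalence if it is uniformly expansive and admits a uniformly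
expansive coarse inverse. -/
def IsCoarseEquivalence {X Y : Type*} [PseudoMetricSpace X] [PseudoMetricSpace Y]
    (f : X → Y) : Prop :=
  UniformlyExpansive f ∧
    ∃ g : Y → X, UniformlyExpansive g ∧ Close (f ∘ g) id ∧ Close (g ∘ f) id

/-- A metric space has bounded geometry if balls of radius `R` have uniformly bounded
cardinality. -/
def BoundedGeometry (X : Type*) [PseudoMetricSpace X] : Prop :=
  ∀ R : ℝ, 0 ≤ R → ∃ N : ℕ, ∀ x : X,
    (Metric.closedBall x R).Finite ∧ (Metric.closedBall x R).ncard ≤ N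

/-- The standard basis vector `δ_x` of `ℓ^p(X)`. -/
noncomputable def delta {X : Type*} (p : ℝ≥0∞) (x : X) : lp (fun _ : X => ℂ) p :=
  letI := Classical.decEq X
  lp.single p x 1

/-- The matrix coefficient `T_{xy} = (T δ_y)(x)` of a bounded operator on `ℓ^p`. -/
noncomputable def matCoef {X Y : Type*} (p : ℝ≥0∞) [Fact (1 ≤ p)]
    (T : lp (fun _ : X => ℂ) p →L[ℂ] lp (fun _ : Y => ℂ) p) (y : Y) (x : X) : ℂ :=
  T (delta p x) y

/-- `T` has propagation at most `R`. -/
def HasPropagationLE {X : Type*} [PseudoMetricSpace X] (p : ℝ≥0∞) [Fact (1 ≤ p)]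
    (T : lp (fun _ : X => ℂ) p →L[ℂ] lp (fun _ : X => ℂ) p) (R : ℝ) : Prop :=
  ∀ x y : X, matCoef p T x y ≠ 0 → dist x y ≤ R

/-- `T` has finite propagation. -/
def FiniteProp {X : Type*} [PseudoMetricSpace X] (p : ℝ≥0∞) [Fact (1 ≤ p)]
    (T : lp (fun _ : X => ℂ) p →L[ℂ] lp (fun _ : X => ℂ) p) : Prop :=
  ∃ R : ℝ, 0 ≤ R ∧ HasPropagationLE p T R

/-- The `ℓ^p` uniform Roe algebra of `X`, as the operator-norm closure of the set of
finite propagation bounded operators on `ℓ^p(X)`. -/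
noncomputable def RoeAlgSet (X : Type*) [PseudoMetricSpace X] (p : ℝ≥0∞) [Fact (1 ≤ p)] :
    Set (lp (fun _ : X => ℂ) p →L[ℂ] lp (fun _ : X => ℂ) p) :=
  closure {T | FiniteProp p T}

/-! The summing operator sends every `δ_y` to `δ₀`, so all its matrix coefficients in row `0`
equal `1`, arbitrarily far from the diagonal. An operator `S` of propagation at most `R` has
vanishing coefficients `S_{0y}` for `y > R`, and every matrix coefficient is bounded by the
operator norm because `‖δ_y‖ = 1`; hence `‖T - S‖ ≥ |(T - S)_{0y}| = 1`. -/

section Delta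

variable {X : Type*} (p : ℝ≥0∞)

lemma delta_apply_self (x : X) : delta p x x = 1 :=
  letI := Classical.decEq X
  lp.single_apply_self ..

lemma delta_apply_of_ne {x y : X} (h : y ≠ x) : delta p x y = 0 :=
  letI := Classical.decEq X
  lp.single_apply_ne _ _ _ h

lemma norm_delta (hp : 0 < p) (x : X) : ‖delta p x‖ = 1 :=
  letI := Classical.decEq X
  (lp.norm_single hp x 1).trans norm_one

lemma tsum_delta (x : X) : ∑' y, delta p x y = 1 :=
  (tsum_eq_single (f := ⇑(delta p x)) x fun _ hy => delta_apply_of_ne p hy).trans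
    (delta_apply_self p x)

section MatCoef

variable [Fact (1 ≤ p)]

lemma norm_matCoef_le (T : lp (fun _ : X => ℂ) p →L[ℂ] lp (fun _ : X => ℂ) p) (x y : X) :
    ‖matCoef p T x y‖ ≤ ‖T‖ := by
  have hp : 0 < p := zero_lt_one.trans_le Fact.out
  exact (lp.norm_apply_le_norm hp.ne' _ x).trans
    (T.unit_le_opNorm _ (norm_delta p hp y).le)

lemma matCoef_sub (T S : lp (fun _ : X => ℂ) p →L[ℂ] lp (fun _ : X => ℂ) p) (x y : X) :
    matCoef p (T - S) x y = matCoef p T x y - matCoef p S x y :=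
  rfl

end MatCoef

end Delta

section Propagation

variable {X : Type*} [PseudoMetricSpace X] {p : ℝ≥0∞} [Fact (1 ≤ p)]
  {T S : lp (fun _ : X => ℂ) p →L[ℂ] lp (fun _ : X => ℂ) p}

lemma HasPropagationLE.matCoef_eq_zero {R : ℝ} (hS : HasPropagationLE p S R) {x y : X}
    (h : R < dist x y) : matCoef p S x y = 0 :=
  by_contra fun hne => (hS x y hne).not_gt h

lemma le_norm_sub_of_finiteProp {c : ℝ}
    (hT : ∀ R : ℝ, ∃ x y : X, R < dist x y ∧ c ≤ ‖matCoef p T x y‖) (hS : FiniteProp p S) :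
    c ≤ ‖T - S‖ := by
  obtain ⟨R, -, hR⟩ := hS
  obtain ⟨x, y, hxy, hc⟩ := hT R
  calc c ≤ ‖matCoef p T x y‖ := hc
    _ = ‖matCoef p (T - S) x y‖ := by rw [matCoef_sub p, hR.matCoef_eq_zero hxy, sub_zero]
    _ ≤ ‖T - S‖ := norm_matCoef_le p _ x y

lemma notMem_roeAlgSet_of_le_norm_sub {c : ℝ} (hc : 0 < c)
    (hT : ∀ S, FiniteProp p S → c ≤ ‖T - S‖) : T ∉ RoeAlgSet X p := by
  intro hmem
  obtain ⟨S, hS, hTS⟩ := Metric.mem_closure_iff.1 hmem c hc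
  rw [dist_eq_norm] at hTS
  exact (hT S hS).not_gt hTS

end Propagation

section SummingOperator

variable {X : Type*}

noncomputable def summingOp (x₀ : X) : lp (fun _ : X => ℂ) 1 →L[ℂ] lp (fun _ : X => ℂ) 1 :=
  (lp.tsumCLM ℂ X ℂ).smulRight (delta 1 x₀)

lemma summingOp_apply (x₀ : X) (ξ : lp (fun _ : X => ℂ) 1) :
    summingOp x₀ ξ = (∑' x, ξ x) • delta 1 x₀ :=
  rfl

lemma matCoef_summingOp (x₀ y : X) : matCoef 1 (summingOp x₀) x₀ y = 1 := by
  simp only [matCoef, summingOp_apply, tsum_delta, one_smul, delta_apply_self]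

lemma one_le_norm_summingOp_sub [PseudoMetricSpace X] {x₀ : X}
    (hX : ∀ R : ℝ, ∃ y, R < dist x₀ y) {S : lp (fun _ : X => ℂ) 1 →L[ℂ] lp (fun _ : X => ℂ) 1}
    (hS : FiniteProp 1 S) : 1 ≤ ‖summingOp x₀ - S‖ := by
  refine le_norm_sub_of_finiteProp (fun R => ?_) hS
  obtain ⟨y, hy⟩ := hX R
  exact ⟨x₀, y, hy, by rw [matCoef_summingOp, norm_one]⟩

end SummingOperator

lemma exists_nat_lt_dist_zero (R : ℝ) : ∃ n : ℕ, R < dist 0 n := by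
  obtain ⟨n, hn⟩ := exists_nat_gt R
  exact ⟨n, by simpa [Nat.dist_eq] using hn⟩

/-- On `ℓ¹(ℕ)` (with the natural metric on `ℕ`), the rank-one operator
`T ξ = (Σₙ ξₙ) δ₀` is bounded, but it is at distance at least `1` from every bounded operator
of finite propagation; in particular it does not belong to the `ℓ¹` uniform Roe algebra. -/
theorem summing_functional_not_in_uniform_Roe_algebra :
    ∃ T : lp (fun _ : ℕ => ℂ) 1 →L[ℂ] lp (fun _ : ℕ => ℂ) 1,
      (∀ ξ : lp (fun _ : ℕ => ℂ) 1, T ξ = (∑' n : ℕ, ξ n) • delta 1 0) ∧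
      (∀ S : lp (fun _ : ℕ => ℂ) 1 →L[ℂ] lp (fun _ : ℕ => ℂ) 1,
        FiniteProp 1 S → 1 ≤ ‖T - S‖) ∧
      T ∉ RoeAlgSet ℕ 1 := by
  have hT : ∀ S, FiniteProp 1 S → 1 ≤ ‖summingOp 0 - S‖ := fun _ =>
    one_le_norm_summingOp_sub exists_nat_lt_dist_zero
  exact ⟨summingOp 0, summingOp_apply 0, hT, notMem_roeAlgSet_of_le_norm_sub one_pos hT⟩
end

section
/- Let X, Y be metric spaces with bounded geometry, p ∈ [1,∞), and let f : X → Y be a bijection such that both f and f⁻¹ are uniformly expansive. Let U : ℓ^p(X) → ℓ^p(Y) be the surjective isometry with U δ_x = δ_{f(x)}. Then conjugation T ↦ U T U⁻¹ maps finite propagation operators on ℓ^p(X) to finite propagation operators on ℓ^p(Y), and hence restricts to an isometric algebra isomorphism from the ℓ^p uniform Roe algebra B^p_u(X) onto B^p_u(Y). -/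
open scoped ENNReal

/-- Conjugation by a linear isometry equivalence, as a map on bounded operators. -/
noncomputable def conjIso {E F : Type*} [NormedAddCommGroup E] [NormedSpace ℂ E]
    [NormedAddCommGroup F] [NormedSpace ℂ F] (U : E ≃ₗᵢ[ℂ] F) (T : E →L[ℂ] E) :
    F →L[ℂ] F :=
  (U.toContinuousLinearEquiv : E →L[ℂ] F).comp
    (T.comp (U.symm.toContinuousLinearEquiv : F →L[ℂ] E))


section Aux

/-- The evaluation functional on `ℓ^p`. -/
noncomputable def evalCLM (p : ℝ≥0∞) [Fact (1 ≤ p)] {X : Type*} (x : X) :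
    lp (fun _ : X => ℂ) p →L[ℂ] ℂ :=
  LinearMap.mkContinuous
    { toFun := fun w => w x
      map_add' := fun v w => by simp
      map_smul' := fun c w => by simp }
    1
    (fun w => by
      show ‖w x‖ ≤ 1 * ‖w‖
      simpa using lp.norm_apply_le_norm (zero_lt_one.trans_le (Fact.out : 1 ≤ p)).ne' w x)

lemma evalCLM_apply (p : ℝ≥0∞) [Fact (1 ≤ p)] {X : Type*} (x : X)
    (w : lp (fun _ : X => ℂ) p) : evalCLM p x w = w x := rfl

lemma U_apply_eq {X Y : Type*} {p : ℝ≥0∞} [Fact (1 ≤ p)] (hp : p ≠ ∞)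
    (f : X ≃ Y) (U : lp (fun _ : X => ℂ) p ≃ₗᵢ[ℂ] lp (fun _ : Y => ℂ) p)
    (hU : ∀ x : X, U (delta p x) = delta p (f x))
    (w : lp (fun _ : X => ℂ) p) (y : Y) :
    (U w) y = w (f.symm y) := by
  classical
  have h1 : HasSum (fun x : X => lp.single p x (w x)) w := lp.hasSum_single hp w
  have h2 : HasSum (fun x : X => U (lp.single p x (w x))) (U w) :=
    h1.mapL U.toLinearIsometry.toContinuousLinearMap
  have h3 : HasSum (fun x : X => (U (lp.single p x (w x))) y) ((U w) y) :=
    h2.mapL (evalCLM p y)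
  have key : (fun x : X => (U (lp.single p x (w x))) y) =
      fun x : X => if x = f.symm y then w (f.symm y) else 0 := by
    funext x
    have hsingle : lp.single p x (w x) = (w x) • delta p x := by
      simp only [delta]
      rw [← lp.single_smul, smul_eq_mul, mul_one]
    have hval : (U (lp.single p x (w x))) y = (w x) * (delta p (f x)) y := by
      rw [hsingle, map_smul, hU x]
      simp [lp.coeFn_smul, smul_eq_mul]
    rw [hval]
    by_cases hx : x = f.symm y
    · subst hx
      simp [delta, lp.single_apply_self, Equiv.apply_symm_apply]
    · have hne : y ≠ f x := by
        intro h; exact hx (by simp [h])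
      simp [delta, lp.single_apply_ne _ _ _ hne, hx, Pi.single_apply, hne]
  rw [key] at h3
  exact h3.unique (hasSum_ite_eq (f.symm y) _)

section conjGen
variable {E F : Type*} [NormedAddCommGroup E] [NormedSpace ℂ E]
    [NormedAddCommGroup F] [NormedSpace ℂ F] (U : E ≃ₗᵢ[ℂ] F)

lemma conjIso_apply (T : E →L[ℂ] E) (v : F) : conjIso U T v = U (T (U.symm v)) := rfl

lemma conjIso_symm_conjIso (T : E →L[ℂ] E) : conjIso U.symm (conjIso U T) = T := by
  ext v
  simp [conjIso_apply]

lemma conjIso_conjIso_symm (T : F →L[ℂ] F) : conjIso U (conjIso U.symm T) = T := by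
  ext v
  simp [conjIso_apply]

lemma conjIso_sub (S T : E →L[ℂ] E) : conjIso U (S - T) = conjIso U S - conjIso U T := by
  ext v
  simp [conjIso_apply]

lemma conjIso_add (S T : E →L[ℂ] E) : conjIso U (S + T) = conjIso U S + conjIso U T := by
  ext v
  simp [conjIso_apply]

lemma conjIso_mul (S T : E →L[ℂ] E) : conjIso U (S * T) = conjIso U S * conjIso U T := by
  ext v
  simp [conjIso_apply, ContinuousLinearMap.mul_apply]

lemma conjIso_norm_le (T : E →L[ℂ] E) : ‖conjIso U T‖ ≤ ‖T‖ := by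
  refine ContinuousLinearMap.opNorm_le_bound _ (norm_nonneg T) fun v => ?_
  rw [conjIso_apply, U.norm_map]
  calc ‖T (U.symm v)‖ ≤ ‖T‖ * ‖U.symm v‖ := T.le_opNorm _
    _ = ‖T‖ * ‖v‖ := by rw [U.symm.norm_map]

lemma conjIso_norm (T : E →L[ℂ] E) : ‖conjIso U T‖ = ‖T‖ := by
  refine le_antisymm (conjIso_norm_le U T) ?_
  conv_lhs => rw [← conjIso_symm_conjIso U T]
  exact conjIso_norm_le U.symm _

lemma conjIso_isometry : Isometry (conjIso U) := by
  refine Isometry.of_dist_eq fun S T => ?_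
  rw [dist_eq_norm, dist_eq_norm, ← conjIso_sub, conjIso_norm]

end conjGen

lemma U_symm_delta {X Y : Type*} {p : ℝ≥0∞} [Fact (1 ≤ p)]
    (f : X ≃ Y) (U : lp (fun _ : X => ℂ) p ≃ₗᵢ[ℂ] lp (fun _ : Y => ℂ) p)
    (hU : ∀ x : X, U (delta p x) = delta p (f x)) (y : Y) :
    U.symm (delta p y) = delta p (f.symm y) := by
  have h : U (delta p (f.symm y)) = delta p y := by
    rw [hU]; simp
  rw [← h, U.symm_apply_apply]

lemma matCoef_conj {X Y : Type*} {p : ℝ≥0∞} [Fact (1 ≤ p)] (hp : p ≠ ∞)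
    (f : X ≃ Y) (U : lp (fun _ : X => ℂ) p ≃ₗᵢ[ℂ] lp (fun _ : Y => ℂ) p)
    (hU : ∀ x : X, U (delta p x) = delta p (f x))
    (T : lp (fun _ : X => ℂ) p →L[ℂ] lp (fun _ : X => ℂ) p) (y x : Y) :
    matCoef p (conjIso U T) y x = matCoef p T (f.symm y) (f.symm x) := by
  unfold matCoef
  rw [conjIso_apply, U_symm_delta f U hU, U_apply_eq hp f U hU]

lemma conj_finiteProp {X Y : Type*} [MetricSpace X] [MetricSpace Y]
    {p : ℝ≥0∞} [Fact (1 ≤ p)] (hp : p ≠ ∞)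
    (f : X ≃ Y) (hf : UniformlyExpansive (⇑f))
    (U : lp (fun _ : X => ℂ) p ≃ₗᵢ[ℂ] lp (fun _ : Y => ℂ) p)
    (hU : ∀ x : X, U (delta p x) = delta p (f x))
    (T : lp (fun _ : X => ℂ) p →L[ℂ] lp (fun _ : X => ℂ) p)
    (hT : FiniteProp p T) : FiniteProp p (conjIso U T) := by
  obtain ⟨R, hR, hprop⟩ := hT
  obtain ⟨S, hS, hSle⟩ := hf (R + 1) (by linarith)
  refine ⟨S, hS.le, fun y x hne => ?_⟩
  rw [matCoef_conj hp f U hU] at hne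
  have h1 : dist (f.symm y) (f.symm x) ≤ R := hprop _ _ hne
  have h2 := hSle (f.symm y) (f.symm x) (by linarith)
  simpa using h2

end Aux

/-- If `f : X → Y` is a bijection such that `f` and `f⁻¹` are uniformly expansive, and
`U : ℓ^p(X) → ℓ^p(Y)` is the induced isometry `U δ_x = δ_{f(x)}`, then conjugation by `U`
sends finite propagation operators to finite propagation operators, and restricts to an
isometric algebra isomorphism of `B^p_u(X)` onto `B^p_u(Y)`. -/
theorem conjugation_by_bijective_coarse_equivalence {X Y : Type*}
    [MetricSpace X] [MetricSpace Y] (hX : BoundedGeometry X) (hY : BoundedGeometry Y)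
    (p : ℝ≥0∞) [Fact (1 ≤ p)] (hp : p ≠ ∞)
    (f : X ≃ Y) (hf : UniformlyExpansive (⇑f)) (hf' : UniformlyExpansive (⇑f.symm))
    (U : lp (fun _ : X => ℂ) p ≃ₗᵢ[ℂ] lp (fun _ : Y => ℂ) p)
    (hU : ∀ x : X, U (delta p x) = delta p (f x)) :
    (∀ T, FiniteProp p T → FiniteProp p (conjIso U T)) ∧
      (conjIso U '' RoeAlgSet X p = RoeAlgSet Y p) ∧
      (∀ T, ‖conjIso U T‖ = ‖T‖) ∧
      (∀ S T, conjIso U (S * T) = conjIso U S * conjIso U T) ∧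
      (∀ S T, conjIso U (S + T) = conjIso U S + conjIso U T) := by
  constructor
  · exact fun T hT => conj_finiteProp hp f hf U hU T hT
  have hU' : ∀ y : Y, U.symm (delta p y) = delta p (f.symm y) := U_symm_delta f U hU
  have part1' : ∀ T, FiniteProp p T → FiniteProp p (conjIso U.symm T) :=
    fun T hT => conj_finiteProp hp f.symm hf' U.symm hU' T hT
  refine ⟨?_, conjIso_norm U, conjIso_mul U, conjIso_add U⟩
  have himg : conjIso U '' {T | FiniteProp p T} =
      {T : lp (fun _ : Y => ℂ) p →L[ℂ] lp (fun _ : Y => ℂ) p | FiniteProp p T} := by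
    apply Set.Subset.antisymm
    · rintro _ ⟨T, hT, rfl⟩
      exact conj_finiteProp hp f hf U hU T hT
    · intro T hT
      exact ⟨conjIso U.symm T, part1' T hT, conjIso_conjIso_symm U T⟩
  let h : (lp (fun _ : X => ℂ) p →L[ℂ] lp (fun _ : X => ℂ) p) ≃ₜ
      (lp (fun _ : Y => ℂ) p →L[ℂ] lp (fun _ : Y => ℂ) p) :=
    { toFun := conjIso U
      invFun := conjIso U.symm
      left_inv := conjIso_symm_conjIso U
      right_inv := conjIso_conjIso_symm U
      continuous_toFun := (conjIso_isometry U).continuous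
      continuous_invFun := (conjIso_isometry U.symm).continuous }
  have hcl := h.image_closure
    {T : lp (fun _ : X => ℂ) p →L[ℂ] lp (fun _ : X => ℂ) p | FiniteProp p T}
  unfold RoeAlgSet
  rw [← himg]
  exact hcl
end

section
/- Let p ∈ [1,∞), p ≠ 2, and let X, Y be metric spaces with bounded geometry. Suppose U : ℓ^p(X × ℕ) → ℓ^p(Y × ℕ) is a surjective isometry of the form (Uξ)(y,m) = h(y,m) ξ(g⁻¹(y,m)) for a unimodular function h and a bijection g : X × ℕ → Y × ℕ, such that conjugation by U and by U⁻¹ preserve the stabilized uniform Roe algebras. Define f : X → Y by f(x) = π_Y(g(x,0)) and f' : Y → X by f'(y) = π_X(g⁻¹(y,0)), where π_X, π_Y are the coordinate projections. Assume the following uniform closeness property: for all R ≥ 0 there is S ≥ 0 such that whenever d(x,x') ≤ R in X and y, y' ∈ Y satisfy |⟨Uδ_{(x,n)}, δ_{(y,m)}⟩| = 1 = |⟨Uδ_{(x',n')}, δ_{(y',m')}⟩| for some m,n,m',n' ∈ ℕ, then d(y,y') ≤ S, and the symmetric property with X, Y swapped and U replaced by U⁻¹. Then f and f' are uniformly expansive,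 f ∘ f' is close to the identity on Y, and f' ∘ f is close to the identity on X; hence X and Y are coarsely equivalent. -/
open scoped ENNReal

/-!
The Lamperti form gives `|(U δ_z)(g z)| = 1`, so the closeness hypothesis on `U` says that `g`
moves first coordinates in a controlled way, uniformly in the `ℕ`-coordinates; the same holds for
`g⁻¹` and `U⁻¹`. Then `f` and `f'` are uniformly expansive, and since `g` sends the point
`g⁻¹(y, 0)`, which lies over `f' y`, to `(y, 0)`, the case `R = 0` puts `f (f' y)` within bounded
distance of `y`; symmetrically for `f' ∘ f`.
-/

lemma delta_apply_self_s18 {Z : Type*} (p : ℝ≥0∞) (z : Z) :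
    (delta p z : ∀ _ : Z, ℂ) z = 1 := by
  classical
  exact lp.single_apply_self p z 1

def UniformClosenessProperty {X Y A B : Type*} [PseudoMetricSpace X] [PseudoMetricSpace Y]
    (p : ℝ≥0∞) (T : lp (fun _ : X × A => ℂ) p → lp (fun _ : Y × B => ℂ) p) : Prop :=
  ∀ R : ℝ, 0 ≤ R → ∃ S : ℝ, 0 ≤ S ∧
    ∀ (x x' : X) (y y' : Y) (n n' : A) (m m' : B), dist x x' ≤ R →
      ‖T (delta p (x, n)) (y, m)‖ = 1 → ‖T (delta p (x', n')) (y', m')‖ = 1 → dist y y' ≤ S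

def UniformlyExpansiveFst {X Y A B : Type*} [PseudoMetricSpace X] [PseudoMetricSpace Y]
    (e : X × A → Y × B) : Prop :=
  ∀ R : ℝ, 0 ≤ R → ∃ S : ℝ, 0 ≤ S ∧
    ∀ (x x' : X) (n n' : A), dist x x' ≤ R → dist (e (x, n)).1 (e (x', n')).1 ≤ S

section Lamperti

variable {α β : Type*} {p : ℝ≥0∞} {h : β → ℂ} {g : α ≃ β}

lemma norm_apply_symm_eq_of_lamperti (hh : ∀ z, ‖h z‖ = 1)
    {T : lp (fun _ : α => ℂ) p → lp (fun _ : β => ℂ) p}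
    (hT : ∀ ξ z, T ξ z = h z * ξ (g.symm z)) (ξ : lp (fun _ : α => ℂ) p) (z : β) :
    ‖ξ (g.symm z)‖ = ‖T ξ z‖ := by
  rw [hT, norm_mul, hh, one_mul]

variable [Fact (1 ≤ p)] (hh : ∀ z, ‖h z‖ = 1)
  {U : lp (fun _ : α => ℂ) p ≃ₗᵢ[ℂ] lp (fun _ : β => ℂ) p} (hU : ∀ ξ z, U ξ z = h z * ξ (g.symm z))
include hh hU

lemma norm_apply_delta_eq_one_of_lamperti (z : α) : ‖U (delta p z) (g z)‖ = 1 := by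
  rw [← norm_apply_symm_eq_of_lamperti hh hU, g.symm_apply_apply, delta_apply_self_s18, norm_one]

lemma norm_symm_apply_delta_eq_one_of_lamperti (w : β) : ‖U.symm (delta p w) (g.symm w)‖ = 1 := by
  rw [norm_apply_symm_eq_of_lamperti hh hU, U.apply_symm_apply, delta_apply_self_s18, norm_one]

end Lamperti

section Coarse

variable {X Y A B : Type*} [PseudoMetricSpace X] [PseudoMetricSpace Y]

lemma UniformClosenessProperty.uniformlyExpansiveFst {p : ℝ≥0∞}
    {T : lp (fun _ : X × A => ℂ) p → lp (fun _ : Y × B => ℂ) p} (hT : UniformClosenessProperty p T)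
    {e : X × A → Y × B} (he : ∀ z, ‖T (delta p z) (e z)‖ = 1) : UniformlyExpansiveFst e := by
  intro R hR
  obtain ⟨S, hS, hTS⟩ := hT R hR
  exact ⟨S, hS, fun x x' n n' hxx' => hTS _ _ _ _ _ _ _ _ hxx' (he (x, n)) (he (x', n'))⟩

lemma UniformlyExpansiveFst.uniformlyExpansive {e : X × A → Y × B} (he : UniformlyExpansiveFst e)
    (a : A) : UniformlyExpansive fun x => (e (x, a)).1 := by
  intro R hR
  obtain ⟨S, -, heS⟩ := he R hR.le
  exact ⟨max S 1, by positivity, fun x x' hxx' => (heS x x' a a hxx').trans (le_max_left _ _)⟩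

lemma UniformlyExpansiveFst.close_comp_symm {e : X × A ≃ Y × B} (he : UniformlyExpansiveFst e)
    (a : A) (b : B) : Close ((fun x => (e (x, a)).1) ∘ fun y => (e.symm (y, b)).1) id := by
  obtain ⟨S, -, heS⟩ := he 0 le_rfl
  refine ⟨max S 1, by positivity, fun y => ?_⟩
  have hy : (e (e.symm (y, b))).1 = y := by rw [e.apply_symm_apply]
  calc dist (e ((e.symm (y, b)).1, a)).1 y
      = dist (e ((e.symm (y, b)).1, a)).1 (e ((e.symm (y, b)).1, (e.symm (y, b)).2)).1 := by
        rw [Prod.mk.eta, hy]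
    _ ≤ S := heS _ _ _ _ (dist_self _).le
    _ ≤ max S 1 := le_max_left _ _

end Coarse

theorem stable_isomorphism_gives_coarse_equivalence_general {X Y : Type*}
    [MetricSpace X] [MetricSpace Y]
    (p : ℝ≥0∞) [Fact (1 ≤ p)]
    (U : lp (fun _ : X × ℕ => ℂ) p ≃ₗᵢ[ℂ] lp (fun _ : Y × ℕ => ℂ) p)
    (h : Y × ℕ → ℂ) (g : (X × ℕ) ≃ (Y × ℕ)) (hh : ∀ z : Y × ℕ, ‖h z‖ = 1)
    (hU : ∀ (ξ : lp (fun _ : X × ℕ => ℂ) p) (z : Y × ℕ), (U ξ) z = h z * ξ (g.symm z))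
    (hclose : ∀ R : ℝ, 0 ≤ R → ∃ S : ℝ, 0 ≤ S ∧
      ∀ (x x' : X) (y y' : Y) (n n' m m' : ℕ), dist x x' ≤ R →
        ‖(U (delta p (x, n))) (y, m)‖ = 1 → ‖(U (delta p (x', n'))) (y', m')‖ = 1 →
          dist y y' ≤ S)
    (hclose' : ∀ R : ℝ, 0 ≤ R → ∃ S : ℝ, 0 ≤ S ∧
      ∀ (y y' : Y) (x x' : X) (m m' n n' : ℕ), dist y y' ≤ R →
        ‖(U.symm (delta p (y, m))) (x, n)‖ = 1 →
          ‖(U.symm (delta p (y', m'))) (x', n')‖ = 1 → dist x x' ≤ S) :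
    UniformlyExpansive (fun x : X => (g (x, 0)).1) ∧
      UniformlyExpansive (fun y : Y => (g.symm (y, 0)).1) ∧
      Close ((fun x : X => (g (x, 0)).1) ∘ (fun y : Y => (g.symm (y, 0)).1)) id ∧
      Close ((fun y : Y => (g.symm (y, 0)).1) ∘ (fun x : X => (g (x, 0)).1)) id ∧
      ∃ (f : X → Y) (f' : Y → X), UniformlyExpansive f ∧ UniformlyExpansive f' ∧
        Close (f ∘ f') id ∧ Close (f' ∘ f) id := by
  have hg : UniformlyExpansiveFst g :=
    UniformClosenessProperty.uniformlyExpansiveFst (T := U) hclose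
      (norm_apply_delta_eq_one_of_lamperti hh hU)
  have hg' : UniformlyExpansiveFst g.symm :=
    UniformClosenessProperty.uniformlyExpansiveFst (T := U.symm) hclose'
      (norm_symm_apply_delta_eq_one_of_lamperti hh hU)
  have hf := hg.uniformlyExpansive 0
  have hf' := hg'.uniformlyExpansive 0
  have hff' := hg.close_comp_symm 0 0
  have hf'f := hg'.close_comp_symm 0 0
  exact ⟨hf, hf', hff', hf'f, _, _, hf, hf', hff', hf'f⟩

/-- Let `p ∈ [1,∞)`, `p ≠ 2`, and let `U : ℓ^p(X × ℕ) → ℓ^p(Y × ℕ)` be a surjective isometry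
of Lamperti form `(Uξ)(y,m) = h(y,m) ξ(g⁻¹(y,m))`. Define `f(x) = π_Y(g(x,0))` and
`f'(y) = π_X(g⁻¹(y,0))`. Assuming the uniform closeness property (in both directions), `f`
and `f'` are uniformly expansive, `f ∘ f'` and `f' ∘ f` are close to the identities, and
hence `X` and `Y` are coarsely equivalent. -/
theorem stable_isomorphism_gives_coarse_equivalence {X Y : Type*}
    [MetricSpace X] [MetricSpace Y] (hX : BoundedGeometry X) (hY : BoundedGeometry Y)
    (p : ℝ≥0∞) [Fact (1 ≤ p)] (hp : p ≠ ∞) (hp2 : p ≠ 2)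
    (U : lp (fun _ : X × ℕ => ℂ) p ≃ₗᵢ[ℂ] lp (fun _ : Y × ℕ => ℂ) p)
    (h : Y × ℕ → ℂ) (g : (X × ℕ) ≃ (Y × ℕ)) (hh : ∀ z : Y × ℕ, ‖h z‖ = 1)
    (hU : ∀ (ξ : lp (fun _ : X × ℕ => ℂ) p) (z : Y × ℕ), (U ξ) z = h z * ξ (g.symm z))
    (hclose : ∀ R : ℝ, 0 ≤ R → ∃ S : ℝ, 0 ≤ S ∧
      ∀ (x x' : X) (y y' : Y) (n n' m m' : ℕ), dist x x' ≤ R →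
        ‖(U (delta p (x, n))) (y, m)‖ = 1 → ‖(U (delta p (x', n'))) (y', m')‖ = 1 →
          dist y y' ≤ S)
    (hclose' : ∀ R : ℝ, 0 ≤ R → ∃ S : ℝ, 0 ≤ S ∧
      ∀ (y y' : Y) (x x' : X) (m m' n n' : ℕ), dist y y' ≤ R →
        ‖(U.symm (delta p (y, m))) (x, n)‖ = 1 →
          ‖(U.symm (delta p (y', m'))) (x', n')‖ = 1 → dist x x' ≤ S) :
    UniformlyExpansive (fun x : X => (g (x, 0)).1) ∧
      UniformlyExpansive (fun y : Y => (g.symm (y, 0)).1) ∧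
      Close ((fun x : X => (g (x, 0)).1) ∘ (fun y : Y => (g.symm (y, 0)).1)) id ∧
      Close ((fun y : Y => (g.symm (y, 0)).1) ∘ (fun x : X => (g (x, 0)).1)) id ∧
      ∃ (f : X → Y) (f' : Y → X), UniformlyExpansive f ∧ UniformlyExpansive f' ∧
        Close (f ∘ f') id ∧ Close (f' ∘ f) id :=
  stable_isomorphism_gives_coarse_equivalence_general p U h g hh hU hclose hclose'
end
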